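/- If Z* is a standard normal random variable and Z := log|Z*|, then E[Z] = (−γ − log 2)/2, where γ is the Euler–Mascheroni constant. -/
import Mathlib

open MeasureTheory ProbabilityTheory Real

section Aux
open Set

lemma gammaDerivHalf :
    ∫ t in Ioi (0:ℝ), t ^ (-(1/2):ℝ) * (Real.log t * Real.exp (-t)) =
      -Real.sqrt π * (Real.eulerMascheroniConstant + 2 * Real.log 2) := by
  set C : ℂ := ∫ t : ℝ in Ioi 0, (t:ℂ) ^ ((1/2:ℂ) - 1) * (Real.log t * Real.exp (-t)) with hC
  have hderiv : HasDerivAt Complex.GammaIntegral C (1/2 : ℂ) :=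
    Complex.hasDerivAt_GammaIntegral (by norm_num)
  have hG : HasDerivAt Complex.Gamma C (1/2 : ℂ) := by
    refine hderiv.congr_of_eventuallyEq ?_
    have hopen : IsOpen {s : ℂ | 0 < s.re} := isOpen_lt continuous_const Complex.continuous_re
    filter_upwards [hopen.mem_nhds (by norm_num)] with s hs
    exact Complex.Gamma_eq_integral hs
  have h12 : (1/2 : ℂ) = ((1/2 : ℝ) : ℂ) := by norm_num
  rw [h12] at hG
  have hGr : HasDerivAt (fun x : ℝ => Complex.Gamma (x : ℂ)) C (1/2 : ℝ) := hG.comp_ofReal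
  have hGr' : HasDerivAt (fun x : ℝ => ((Real.Gamma x : ℂ)))
      ((-Real.sqrt π * (Real.eulerMascheroniConstant + 2 * Real.log 2) : ℝ) : ℂ) (1/2 : ℝ) :=
    Real.hasDerivAt_Gamma_one_half.ofReal_comp
  have hGr'' : HasDerivAt (fun x : ℝ => ((Real.Gamma x : ℂ)))
      C (1/2 : ℝ) := by
    refine hGr.congr_of_eventuallyEq ?_
    filter_upwards with x
    exact (Complex.Gamma_ofReal x).symm
  have hCval : C = ((-Real.sqrt π * (Real.eulerMascheroniConstant + 2 * Real.log 2) : ℝ) : ℂ) :=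
    hGr''.unique hGr'
  have hCre : C = ((∫ t in Ioi (0:ℝ), t ^ (-(1/2):ℝ) * (Real.log t * Real.exp (-t)) : ℝ) : ℂ) := by
    rw [hC]
    have step : (∫ t : ℝ in Ioi 0, (t:ℂ) ^ ((1/2:ℂ) - 1) * (Real.log t * Real.exp (-t)))
        = ∫ t : ℝ in Ioi 0, ((t ^ (-(1/2):ℝ) * (Real.log t * Real.exp (-t)) : ℝ) : ℂ) := by
      refine setIntegral_congr_fun measurableSet_Ioi (fun t ht => ?_)
      have h1 : ((1/2:ℂ) - 1) = ((-(1/2):ℝ) : ℂ) := by norm_num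
      rw [h1, ← Complex.ofReal_cpow (le_of_lt ht)]
      push_cast
      ring
    rw [step]
    exact integral_ofReal
  rw [hCre] at hCval
  exact_mod_cast hCval

lemma abs_log_le (x : ℝ) (hx : 0 < x) : |Real.log x| ≤ 2 * x ^ (-(1/2):ℝ) + x := by
  have hrp : (0:ℝ) < x ^ (-(1/2):ℝ) := Real.rpow_pos_of_pos hx _
  rcases le_or_gt 1 x with h1 | h1
  · rw [abs_of_nonneg (Real.log_nonneg h1)]
    have := Real.log_le_sub_one_of_pos hx
    nlinarith
  · rw [abs_of_nonpos (Real.log_nonpos hx.le h1.le)]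
    have hl : Real.log (x ^ (-(1/2):ℝ)) = -(1/2) * Real.log x := Real.log_rpow hx _
    have := Real.log_le_sub_one_of_pos hrp
    nlinarith

lemma integrableOn_log_mul_exp : IntegrableOn (fun x : ℝ => Real.log x * Real.exp (-x^2)) (Ioi 0) := by
  have h1 : IntegrableOn (fun x : ℝ => x ^ (-(1/2):ℝ) * Real.exp (-1 * x ^ 2)) (Ioi 0) :=
    integrableOn_rpow_mul_exp_neg_mul_sq one_pos (by norm_num)
  have h2 : IntegrableOn (fun x : ℝ => x ^ (1:ℝ) * Real.exp (-1 * x ^ 2)) (Ioi 0) :=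
    integrableOn_rpow_mul_exp_neg_mul_sq one_pos (by norm_num)
  refine Integrable.mono' ((h1.const_mul 2).add h2) ?_ ?_
  · exact (measurable_log.mul (by fun_prop)).aestronglyMeasurable
  · filter_upwards [ae_restrict_mem measurableSet_Ioi] with x hx
    have hx0 : (0:ℝ) < x := hx
    have hb := abs_log_le x hx0
    rw [Real.norm_eq_abs, abs_mul, abs_of_nonneg (Real.exp_pos _).le]
    have hexp : Real.exp (-x^2) = Real.exp (-1 * x^2) := by ring_nf
    rw [hexp]
    have : (2 * (x ^ (-(1/2):ℝ) * Real.exp (-1 * x^2)) + x ^ (1:ℝ) * Real.exp (-1 * x^2))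
        = (2 * x ^ (-(1/2):ℝ) + x) * Real.exp (-1 * x^2) := by
      rw [Real.rpow_one]; ring
    calc |Real.log x| * Real.exp (-1 * x^2)
        ≤ (2 * x ^ (-(1/2):ℝ) + x) * Real.exp (-1 * x^2) :=
          mul_le_mul_of_nonneg_right hb (Real.exp_pos _).le
      _ = _ := by simp only [Pi.add_apply]; rw [Real.rpow_one]; ring

lemma subst_sq :
    ∫ t in Ioi (0:ℝ), t ^ (-(1/2):ℝ) * (Real.log t * Real.exp (-t)) =
      4 * ∫ x in Ioi (0:ℝ), Real.log x * Real.exp (-x^2) := by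
  rw [← integral_comp_rpow_Ioi_of_pos
    (g := fun u => u ^ (-(1/2):ℝ) * (Real.log u * Real.exp (-u))) two_pos,
    ← MeasureTheory.integral_const_mul]
  refine setIntegral_congr_fun measurableSet_Ioi (fun x hx => ?_)
  have hx0 : (0:ℝ) < x := hx
  have h1 : (x ^ (2:ℝ)) ^ (-(1/2):ℝ) = x⁻¹ := by
    rw [← Real.rpow_mul hx0.le]
    norm_num
    exact (Real.rpow_neg_one x).trans (by simp)
  have h2 : Real.log (x ^ (2:ℝ)) = 2 * Real.log x := Real.log_rpow hx0 2
  have h3 : x ^ (2:ℝ) = x ^ 2 := Real.rpow_two x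
  simp only [smul_eq_mul]
  rw [h1, h2]
  rw [show (2:ℝ) - 1 = 1 by norm_num, Real.rpow_one, h3]
  field_simp
  ring

lemma subst_scale :
    ∫ t in Ioi (0:ℝ), Real.log t * Real.exp (-t^2/2) =
      Real.sqrt 2 * (Real.log (Real.sqrt 2) * (Real.sqrt π / 2)
        + ∫ x in Ioi (0:ℝ), Real.log x * Real.exp (-x^2)) := by
  have hs2 : (0:ℝ) < Real.sqrt 2 := Real.sqrt_pos.mpr two_pos
  have key := integral_comp_mul_left_Ioi
    (g := fun t => Real.log t * Real.exp (-t^2/2)) 0 hs2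
  rw [mul_zero] at key
  have congr1 : ∫ x in Ioi (0:ℝ), Real.log (Real.sqrt 2 * x) * Real.exp (-(Real.sqrt 2 * x)^2/2)
      = ∫ x in Ioi (0:ℝ), (Real.log (Real.sqrt 2) * Real.exp (-1*x^2)
          + Real.log x * Real.exp (-x^2)) := by
    refine setIntegral_congr_fun measurableSet_Ioi (fun x hx => ?_)
    have hx0 : (0:ℝ) < x := hx
    have hsq : (Real.sqrt 2 * x)^2 = 2 * x^2 := by
      rw [mul_pow, Real.sq_sqrt two_pos.le]
    rw [Real.log_mul hs2.ne' hx0.ne', hsq]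
    have : -(2*x^2)/2 = -x^2 := by ring
    rw [this]
    ring_nf
  have hint1 : IntegrableOn (fun x : ℝ => Real.log (Real.sqrt 2) * Real.exp (-1*x^2)) (Ioi 0) :=
    ((integrable_exp_neg_mul_sq one_pos).integrableOn).const_mul _
  have hint2 : IntegrableOn (fun x : ℝ => Real.log x * Real.exp (-x^2)) (Ioi 0) :=
    integrableOn_log_mul_exp
  calc ∫ t in Ioi (0:ℝ), Real.log t * Real.exp (-t^2/2)
      = Real.sqrt 2 * ∫ x in Ioi (0:ℝ),
          Real.log (Real.sqrt 2 * x) * Real.exp (-(Real.sqrt 2 * x)^2/2) := by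
        rw [key, smul_eq_mul, ← mul_assoc, mul_inv_cancel₀ hs2.ne', one_mul]
    _ = Real.sqrt 2 * (Real.log (Real.sqrt 2) * (Real.sqrt π / 2)
        + ∫ x in Ioi (0:ℝ), Real.log x * Real.exp (-x^2)) := by
        rw [congr1, integral_add hint1 hint2, integral_const_mul]
        congr 2
        have := integral_gaussian_Ioi (1:ℝ)
        rw [this]
        norm_num

lemma gauss_reduce :
    ∫ x, Real.log |x| ∂(gaussianReal 0 1) =
      (Real.sqrt (2*π))⁻¹ * (2 * ∫ t in Ioi (0:ℝ), Real.log t * Real.exp (-t^2/2)) := by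
  rw [gaussianReal_of_var_ne_zero 0 one_ne_zero, gaussianPDF_def]
  have hmeas : Measurable fun x => (gaussianPDFReal 0 1 x).toNNReal :=
    (measurable_gaussianPDFReal 0 1).real_toNNReal
  simp only [ENNReal.ofReal]
  rw [integral_withDensity_eq_integral_smul hmeas]
  have congr1 : ∀ x : ℝ, (gaussianPDFReal 0 1 x).toNNReal • Real.log |x|
      = (Real.sqrt (2*π))⁻¹ * (Real.log |x| * Real.exp (-x^2/2)) := by
    intro x
    rw [NNReal.smul_def, smul_eq_mul,
      Real.coe_toNNReal _ (gaussianPDFReal_nonneg 0 1 x)]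
    unfold gaussianPDFReal
    push_cast
    ring_nf
  simp_rw [congr1]
  rw [MeasureTheory.integral_const_mul]
  congr 1
  have : ∀ x : ℝ, Real.log |x| * Real.exp (-x^2/2)
      = (fun t => Real.log t * Real.exp (-t^2/2)) |x| := by
    intro x
    simp only [sq_abs]
  simp_rw [this]
  exact integral_comp_abs (f := fun t => Real.log t * Real.exp (-t^2/2))

end Aux

/-- If `Z*` is standard normal and `Z := log |Z*|`, then
`E[Z] = (-γ - log 2) / 2`, where `γ` is the Euler–Mascheroni constant. -/
theorem integral_log_abs_std_normal :
    ∫ x, Real.log |x| ∂(gaussianReal 0 1) =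
      (-Real.eulerMascheroniConstant - Real.log 2) / 2 := by
  have hJ : ∫ x in Set.Ioi (0:ℝ), Real.log x * Real.exp (-x^2)
      = -Real.sqrt π * (Real.eulerMascheroniConstant + 2 * Real.log 2) / 4 := by
    have h := subst_sq
    rw [gammaDerivHalf] at h
    linarith
  rw [gauss_reduce, subst_scale, hJ]
  have hs2 : (0:ℝ) < Real.sqrt 2 := Real.sqrt_pos.mpr two_pos
  have hsp : (0:ℝ) < Real.sqrt π := Real.sqrt_pos.mpr Real.pi_pos
  rw [Real.sqrt_mul two_pos.le, Real.log_sqrt two_pos.le]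
  field_simp
  ring
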